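/- (Proposition 5.7) Let φ : 𝔸 ⇸ 𝔹 and ψ : 𝔸' ⇸ 𝔹' be Q-distributors, and let F : 𝔸 → 𝔸' and G : 𝔹' → 𝔹 be Q-functors forming an infomorphism (F,G) : φ → ψ, i.e. φ(x, G y') = ψ(F x, y') for all x ∈ A and y' ∈ B'. Then G is continuous from the Q-closure space (𝔹', ψ_*∘ψ*) to (𝔹, φ_*∘φ*): for every contravariant presheaf λ on 𝔹' and every y ∈ B, G^→(ψ_*(ψ*(λ)))(y) ≤ φ_*(φ*(G^→(λ)))(y), where G^→(ν)(y) = ⨆_{y'∈B'} (ν(y') * 𝔹(y,Gy')). -/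
import Mathlib


open IsQuantale

variable {Q : Type*} [Monoid Q] [CompleteLattice Q] [IsQuantale Q]

/-- Left implication `x ↙ y`: the largest `z` with `z * y ≤ x`. -/
def lres (x y : Q) : Q := sSup {z | z * y ≤ x}

/-- Right implication `y ↘ x`: the largest `z` with `y * z ≤ x`. -/
def rres (y x : Q) : Q := sSup {z | y * z ≤ x}

/-- A Q-category structure on a type `A`. -/
structure IsQCat {A : Type*} (𝔸 : A → A → Q) : Prop where
  refl : ∀ x, 1 ≤ 𝔸 x x
  comp : ∀ x y z, 𝔸 y z * 𝔸 x y ≤ 𝔸 x z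

/-- A Q-distributor `φ : 𝔸 ⇸ 𝔹`. -/
structure IsQDist {A B : Type*} (𝔸 : A → A → Q) (𝔹 : B → B → Q) (φ : A → B → Q) : Prop where
  comp_left : ∀ x y y', 𝔹 y' y * φ x y' ≤ φ x y
  comp_right : ∀ x x' y, φ x' y * 𝔸 x x' ≤ φ x y

/-- A Q-functor `F : 𝔸 → 𝔹`. -/
def IsQFunctor {A B : Type*} (𝔸 : A → A → Q) (𝔹 : B → B → Q) (F : A → B) : Prop :=
  ∀ x x', 𝔸 x x' ≤ 𝔹 (F x) (F x')

/-- A contravariant presheaf on `𝔸`. -/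
def IsContraPsh {A : Type*} (𝔸 : A → A → Q) (μ : A → Q) : Prop :=
  ∀ x x', μ x' * 𝔸 x x' ≤ μ x

/-- A covariant presheaf on `𝔹`. -/
def IsCoPsh {B : Type*} (𝔹 : B → B → Q) (lam : B → Q) : Prop :=
  ∀ y y', 𝔹 y y' * lam y ≤ lam y'

/-- `φ↑(μ)(y) = ⨅ x, φ(x,y) ↙ μ(x)`. -/
def phiUp {A B : Type*} (φ : A → B → Q) (μ : A → Q) : B → Q :=
  fun y => ⨅ x, lres (φ x y) (μ x)

/-- `φ↓(λ)(x) = ⨅ y, λ(y) ↘ φ(x,y)`. -/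
def phiDown {A B : Type*} (φ : A → B → Q) (lam : B → Q) : A → Q :=
  fun x => ⨅ y, rres (lam y) (φ x y)

/-- `φ*(λ)(x) = ⨆ y, λ(y) * φ(x,y)`. -/
def phiStar {A B : Type*} (φ : A → B → Q) (lam : B → Q) : A → Q :=
  fun x => ⨆ y, lam y * φ x y

/-- `φ_*(μ)(y) = ⨅ x, μ(x) ↙ φ(x,y)`. -/
def phiLow {A B : Type*} (φ : A → B → Q) (μ : A → Q) : B → Q :=
  fun y => ⨅ x, lres (μ x) (φ x y)

/-- The underlying set of the Q-category `P𝔸` of contravariant presheaves. -/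
abbrev CPsh {A : Type*} (𝔸 : A → A → Q) := {μ : A → Q // ∀ x x', μ x' * 𝔸 x x' ≤ μ x}

/-- The underlying set of the Q-category `P†𝔹` of covariant presheaves. -/
abbrev CoPsh {B : Type*} (𝔹 : B → B → Q) := {lam : B → Q // ∀ y y', 𝔹 y y' * lam y ≤ lam y'}

/-- The Yoneda embedding `x ↦ 𝔸(·,x)`. -/
def yonedaP {A : Type*} {𝔸 : A → A → Q} (hA : IsQCat 𝔸) (x : A) : CPsh 𝔸 :=
  ⟨fun x' => 𝔸 x' x, fun a b => hA.comp a b x⟩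


lemma le_lres_iff' {x y z : Q} : z ≤ lres x y ↔ z * y ≤ x := by
  constructor
  · intro h
    calc z * y ≤ lres x y * y := mul_le_mul_left h _
    _ ≤ x := by
      unfold lres
      rw [sSup_mul_distrib]
      exact iSup_le fun w => iSup_le fun hw => hw
  · intro h; exact le_sSup h

/-- Proposition 5.7: an infomorphism `(F,G) : φ → ψ` makes `G` continuous with respect
to the Kan closure operators. -/
theorem infomorphism_kan_continuous {A B A' B' : Type*}
    {𝔸 : A → A → Q} {𝔹 : B → B → Q} {𝔸' : A' → A' → Q} {𝔹' : B' → B' → Q}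
    (hA : IsQCat 𝔸) (hB : IsQCat 𝔹) (hA' : IsQCat 𝔸') (hB' : IsQCat 𝔹')
    (φ : A → B → Q) (hφ : IsQDist 𝔸 𝔹 φ)
    (ψ : A' → B' → Q) (hψ : IsQDist 𝔸' 𝔹' ψ)
    (F : A → A') (hF : IsQFunctor 𝔸 𝔸' F)
    (G : B' → B) (hG : IsQFunctor 𝔹' 𝔹 G)
    (hinfo : ∀ (x : A) (y' : B'), φ x (G y') = ψ (F x) y') :
    ∀ lam : B' → Q, IsContraPsh 𝔹' lam → ∀ y : B,
      (⨆ y', phiLow ψ (phiStar ψ lam) y' * 𝔹 y (G y')) ≤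
        phiLow φ (phiStar φ (fun b => ⨆ y', lam y' * 𝔹 b (G y'))) y := by
  intro lam hlam y
  apply iSup_le; intro y'
  apply le_iInf; intro x
  rw [le_lres_iff']
  have h1 : 𝔹 y (G y') * φ x y ≤ ψ (F x) y' := by
    rw [← hinfo]; exact hφ.comp_left x (G y') y
  have h2 : phiLow ψ (phiStar ψ lam) y' * ψ (F x) y' ≤ phiStar ψ lam (F x) := by
    rw [← le_lres_iff']
    exact iInf_le (fun x' => lres (phiStar ψ lam x') (ψ x' y')) (F x)
  calc phiLow ψ (phiStar ψ lam) y' * 𝔹 y (G y') * φ x y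
      = phiLow ψ (phiStar ψ lam) y' * (𝔹 y (G y') * φ x y) := mul_assoc _ _ _
    _ ≤ phiLow ψ (phiStar ψ lam) y' * ψ (F x) y' := mul_le_mul_right h1 _
    _ ≤ phiStar ψ lam (F x) := h2
    _ ≤ phiStar φ (fun b => ⨆ y', lam y' * 𝔹 b (G y')) x := by
        apply iSup_le; intro z'
        rw [← hinfo]
        calc lam z' * φ x (G z')
            = lam z' * 1 * φ x (G z') := by rw [mul_one]
          _ ≤ lam z' * 𝔹 (G z') (G z') * φ x (G z') :=
              mul_le_mul_left (mul_le_mul_right (hB.refl _) _) _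
          _ ≤ (⨆ w, lam w * 𝔹 (G z') (G w)) * φ x (G z') :=
              mul_le_mul_left (le_iSup (fun w => lam w * 𝔹 (G z') (G w)) z') _
          _ ≤ ⨆ b, (⨆ w, lam w * 𝔹 b (G w)) * φ x b :=
              le_iSup (fun b => (⨆ w, lam w * 𝔹 b (G w)) * φ x b) (G z')
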